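/- arXiv:1107.0923 — 3 statements merged into one kernel-verified Lean document; each statement's English description precedes it below -/
import Mathlib

section
/- Let O be a discrete valuation ring with uniformizer ϖ and field of fractions E, and let A be a commutative Noetherian local O-algebra with maximal ideal m. Let π₁ and π₂ be A-modules which, as O-modules, are torsion-free and ϖ-adically separated, and let f : π₁ → π₂ be an A-linear map. Assume: (1) the induced map π₁ ⊗_O E → π₂ ⊗_O E is surjective; (2) the induced map (π₁/ϖπ₁)[m] → (π₂/ϖπ₂)[m] is injective; (3) every element of (ker f)/ϖ(ker f) and every element of (coker f)[ϖ] is annihilated by some power of m. Then f is an isomorphism. -/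
/-!
Let `K = ker f` and `C = (coker f)[ϖ]`. Hypothesis (2), with `ϖ`-torsion-freeness of `π₂` (and,
for `C`, injectivity of `f`), says that `K/ϖK` and `C` have no nonzero `m`-torsion, hence no
nonzero `mⁿ`-torsion for any `n`; by (3) this forces `K = ϖK` and `C = 0`. Separatedness of `π₁`
then gives `K = 0`. By (1), a power of `ϖ` moves any `y ∈ π₂` into the image of `f`, and
`C = 0` lets us divide by `ϖ` inside the image.
-/

open Pointwise

section Torsion

variable {A M : Type*} [CommRing A] [AddCommGroup M] [Module A M]

theorem mem_of_forall_pow_smul_mem (I : Ideal A) {S : Set M} {T : Submodule A M}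
    (hsat : ∀ z ∈ T, (∀ b ∈ I, b • z ∈ S) → z ∈ S) :
    ∀ (n : ℕ), ∀ z ∈ T, (∀ a ∈ I ^ n, a • z ∈ S) → z ∈ S := by
  intro n
  induction n with
  | zero => exact fun z _ h => by simpa using h 1 (by simp)
  | succ n ih =>
    refine fun z hz h => ih z hz fun a ha => hsat (a • z) (T.smul_mem a hz) fun b hb => ?_
    rw [smul_smul, mul_comm]
    exact h (a * b) (by rw [pow_succ]; exact Ideal.mul_mem_mul ha hb)

end Torsion

section Divisibility

variable {α M : Type*} [Monoid α] [MulAction α M] {a : α} {S : Set M}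

theorem exists_pow_smul_eq_of_subset_smul (h : S ⊆ a • S) :
    ∀ (n : ℕ), ∀ x ∈ S, ∃ y ∈ S, a ^ n • y = x := by
  intro n
  induction n with
  | zero => exact fun x hx => ⟨x, hx, by rw [pow_zero, one_smul]⟩
  | succ n ih =>
    intro x hx
    obtain ⟨y, hy, rfl⟩ := ih x hx
    obtain ⟨z, hz, rfl⟩ := h hy
    exact ⟨z, hz, by rw [pow_succ, mul_smul]⟩

theorem mem_of_pow_smul_mem (h : ∀ y, a • y ∈ S → y ∈ S) :
    ∀ (n : ℕ) (y : M), a ^ n • y ∈ S → y ∈ S := by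
  intro n
  induction n with
  | zero => exact fun y hy => by simpa using hy
  | succ n ih => exact fun y hy => h y (ih (a • y) (by rwa [← mul_smul, ← pow_succ]))

end Divisibility

theorem exists_smul_mem_range_of_baseChange_surjective {R L M N : Type*} [CommRing R]
    (p : Submonoid R) [CommRing L] [Algebra R L] [IsLocalization p L]
    [AddCommGroup M] [Module R M] [AddCommGroup N] [Module R N]
    {g : M →ₗ[R] N} (hg : Function.Surjective (g.baseChange L)) (y : N) :
    ∃ s ∈ p, s • y ∈ LinearMap.range g := by
  obtain ⟨t, ht⟩ := hg ((1 : L) ⊗ₜ[R] y)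
  obtain ⟨⟨x, s⟩, hs⟩ := IsLocalizedModule.surj p (TensorProduct.mk R L M 1) t
  have heq : TensorProduct.mk R L N 1 ((s : R) • y) = TensorProduct.mk R L N 1 (g x) := by
    have := congrArg (g.baseChange L) hs
    simp only [Submonoid.smul_def, LinearMap.map_smul_of_tower, ht, TensorProduct.mk_apply,
      LinearMap.baseChange_tmul] at this
    rwa [TensorProduct.mk_apply, TensorProduct.mk_apply, TensorProduct.tmul_smul]
  obtain ⟨c, hc⟩ := IsLocalizedModule.exists_of_eq (S := p) heq
  refine ⟨c * s, mul_mem c.2 s.2, (c : R) • x, ?_⟩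
  rw [Submonoid.smul_def, Submonoid.smul_def] at hc
  rw [map_smul, ← hc, mul_smul]

theorem IsDiscreteValuationRing.exists_pow_smul_mem {O M : Type*} [CommRing O] [IsDomain O]
    [IsDiscreteValuationRing O] {ϖ : O} (hϖ : Irreducible ϖ) [AddCommGroup M] [Module O M]
    {P : Submodule O M} {s : O} (hs : s ≠ 0) {y : M} (h : s • y ∈ P) :
    ∃ n : ℕ, ϖ ^ n • y ∈ P := by
  obtain ⟨n, u, rfl⟩ := eq_unit_mul_pow_irreducible hs hϖ
  refine ⟨n, ?_⟩
  simpa [mul_smul, ← Units.smul_def] using P.smul_mem (↑u⁻¹ : O) h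

section

open IsLocalRing

variable {O A π₁ π₂ : Type*} [CommRing O] [CommRing A] [Algebra O A] [IsLocalRing A]
  [AddCommGroup π₁] [Module O π₁] [Module A π₁] [IsScalarTower O A π₁]
  [AddCommGroup π₂] [Module O π₂] [Module A π₂] [IsScalarTower O A π₂]
  {ϖ : O} {f : π₁ →ₗ[A] π₂}

theorem ker_subset_smul_ker (htf₂ : ∀ y : π₂, ϖ • y = 0 → y = 0)
    (hmtors : ∀ x : π₁, (∀ a ∈ maximalIdeal A, ∃ y : π₁, a • x = ϖ • y) →
      (∃ y : π₂, f x = ϖ • y) → ∃ y : π₁, x = ϖ • y)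
    (hker : ∀ x : π₁, f x = 0 →
      ∃ n : ℕ, ∀ a ∈ maximalIdeal A ^ n, ∃ z : π₁, f z = 0 ∧ a • x = ϖ • z) :
    (LinearMap.ker f : Set π₁) ⊆ ϖ • (LinearMap.ker f : Set π₁) := by
  have hsat : ∀ z ∈ LinearMap.ker f,
      (∀ b ∈ maximalIdeal A, b • z ∈ ϖ • (LinearMap.ker f : Set π₁)) →
        z ∈ ϖ • (LinearMap.ker f : Set π₁) := by
    intro z hz h
    rw [LinearMap.mem_ker] at hz
    obtain ⟨y, rfl⟩ := hmtors z (fun b hb => by obtain ⟨w, -, hw⟩ := h b hb; exact ⟨w, hw.symm⟩)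
      ⟨0, by rw [hz, smul_zero]⟩
    refine ⟨y, htf₂ _ ?_, rfl⟩
    rwa [← f.map_smul_of_tower]
  intro x hx
  obtain ⟨n, hn⟩ := hker x hx
  refine mem_of_forall_pow_smul_mem _ hsat n x hx fun a ha => ?_
  obtain ⟨z, hz, h⟩ := hn a ha
  exact ⟨z, hz, h.symm⟩

theorem mem_range_of_smul_mem_range (hinj : Function.Injective f)
    (htf₂ : ∀ y : π₂, ϖ • y = 0 → y = 0)
    (hmtors : ∀ x : π₁, (∀ a ∈ maximalIdeal A, ∃ y : π₁, a • x = ϖ • y) →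
      (∃ y : π₂, f x = ϖ • y) → ∃ y : π₁, x = ϖ • y)
    (hcoker : ∀ y : π₂, (∃ x : π₁, f x = ϖ • y) →
      ∃ n : ℕ, ∀ a ∈ maximalIdeal A ^ n, ∃ x : π₁, f x = a • y)
    {y : π₂} (hy : ϖ • y ∈ LinearMap.range f) : y ∈ LinearMap.range f := by
  have hsat : ∀ z ∈ (LinearMap.range f).comap (DistribSMul.toLinearMap A π₂ ϖ),
      (∀ b ∈ maximalIdeal A, b • z ∈ LinearMap.range f) → z ∈ LinearMap.range f := by
    intro z hz h
    obtain ⟨x₀, hx₀⟩ := hz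
    have hdiv : ∀ b ∈ maximalIdeal A, ∃ w : π₁, b • x₀ = ϖ • w := fun b hb => by
      obtain ⟨w, hw⟩ := h b hb
      refine ⟨w, hinj ?_⟩
      rw [map_smul, hx₀, DistribSMul.toLinearMap_apply, f.map_smul_of_tower, hw, smul_comm]
    obtain ⟨x, rfl⟩ := hmtors x₀ hdiv ⟨z, hx₀⟩
    refine ⟨x, sub_eq_zero.mp (htf₂ _ ?_)⟩
    rw [smul_sub, ← f.map_smul_of_tower, hx₀, DistribSMul.toLinearMap_apply, sub_self]
  obtain ⟨n, hn⟩ := hcoker y hy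
  exact mem_of_forall_pow_smul_mem _ hsat n y hy hn

end

theorem statement0_general {O : Type*} [CommRing O] [IsDomain O] [IsDiscreteValuationRing O]
    (ϖ : O) (hϖ : Irreducible ϖ)
    (E : Type*) [Field E] [Algebra O E] [IsFractionRing O E]
    {A : Type*} [CommRing A] [Algebra O A] [IsLocalRing A]
    {π₁ π₂ : Type*}
    [AddCommGroup π₁] [Module O π₁] [Module A π₁] [IsScalarTower O A π₁]
    [AddCommGroup π₂] [Module O π₂] [Module A π₂] [IsScalarTower O A π₂]
    (f : π₁ →ₗ[A] π₂)
    -- `π₁` and `π₂` are `O`-torsion-free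
    (htf₂ : ∀ y : π₂, ϖ • y = 0 → y = 0)
    -- `π₁` and `π₂` are `ϖ`-adically separated
    (hsep₁ : ∀ x : π₁, (∀ n : ℕ, 1 ≤ n → ∃ y : π₁, x = ϖ ^ n • y) → x = 0)
    -- (1) the induced map `π₁ ⊗_O E → π₂ ⊗_O E` is surjective
    (hE : Function.Surjective ((f.restrictScalars O).baseChange E))
    -- (2) the induced map `(π₁/ϖπ₁)[m] → (π₂/ϖπ₂)[m]` is injective
    (hmtors : ∀ x : π₁, (∀ a ∈ IsLocalRing.maximalIdeal A, ∃ y : π₁, a • x = ϖ • y) →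
      (∃ y : π₂, f x = ϖ • y) → ∃ y : π₁, x = ϖ • y)
    -- (3a) every element of `(ker f)/ϖ(ker f)` is annihilated by some power of `m`
    (hker : ∀ x : π₁, f x = 0 →
      ∃ n : ℕ, ∀ a ∈ (IsLocalRing.maximalIdeal A) ^ n,
        ∃ z : π₁, f z = 0 ∧ a • x = ϖ • z)
    -- (3b) every element of `(coker f)[ϖ]` is annihilated by some power of `m`
    (hcoker : ∀ y : π₂, (∃ x : π₁, f x = ϖ • y) →
      ∃ n : ℕ, ∀ a ∈ (IsLocalRing.maximalIdeal A) ^ n, ∃ x : π₁, f x = a • y) :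
    Function.Bijective f := by
  have hinj : Function.Injective f := by
    refine (injective_iff_map_eq_zero f).2 fun x hx => hsep₁ x fun n _ => ?_
    obtain ⟨y, -, rfl⟩ :=
      exists_pow_smul_eq_of_subset_smul (ker_subset_smul_ker htf₂ hmtors hker) n x hx
    exact ⟨y, rfl⟩
  refine ⟨hinj, fun y => ?_⟩
  obtain ⟨s, hs, hsy⟩ := exists_smul_mem_range_of_baseChange_surjective (nonZeroDivisors O) hE y
  obtain ⟨n, hn⟩ := IsDiscreteValuationRing.exists_pow_smul_mem hϖ (nonZeroDivisors.ne_zero hs) hsy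
  exact mem_of_pow_smul_mem (fun _ => mem_range_of_smul_mem_range hinj htf₂ hmtors hcoker) n y hn

/-- The key lemma: let `O` be a DVR with uniformizer `ϖ` and fraction field `E`, `A` a
commutative Noetherian local `O`-algebra with maximal ideal `m`, and `f : π₁ → π₂` an
`A`-linear map of modules which are `O`-torsion-free and `ϖ`-adically separated.
If (1) the induced map `π₁ ⊗_O E → π₂ ⊗_O E` is surjective, (2) the induced map
`(π₁/ϖπ₁)[m] → (π₂/ϖπ₂)[m]` is injective, and (3) every element of
`(ker f)/ϖ(ker f)` and of `(coker f)[ϖ]` is annihilated by some power of `m`,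
then `f` is an isomorphism. -/
theorem statement0 {O : Type*} [CommRing O] [IsDomain O] [IsDiscreteValuationRing O]
    (ϖ : O) (hϖ : Irreducible ϖ)
    (E : Type*) [Field E] [Algebra O E] [IsFractionRing O E]
    {A : Type*} [CommRing A] [IsNoetherianRing A] [Algebra O A] [IsLocalRing A]
    {π₁ π₂ : Type*}
    [AddCommGroup π₁] [Module O π₁] [Module A π₁] [IsScalarTower O A π₁]
    [AddCommGroup π₂] [Module O π₂] [Module A π₂] [IsScalarTower O A π₂]
    (f : π₁ →ₗ[A] π₂)
    -- `π₁` and `π₂` are `O`-torsion-free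
    (htf₁ : ∀ x : π₁, ϖ • x = 0 → x = 0)
    (htf₂ : ∀ y : π₂, ϖ • y = 0 → y = 0)
    -- `π₁` and `π₂` are `ϖ`-adically separated
    (hsep₁ : ∀ x : π₁, (∀ n : ℕ, 1 ≤ n → ∃ y : π₁, x = ϖ ^ n • y) → x = 0)
    (hsep₂ : ∀ x : π₂, (∀ n : ℕ, 1 ≤ n → ∃ y : π₂, x = ϖ ^ n • y) → x = 0)
    -- (1) the induced map `π₁ ⊗_O E → π₂ ⊗_O E` is surjective
    (hE : Function.Surjective ((f.restrictScalars O).baseChange E))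
    -- (2) the induced map `(π₁/ϖπ₁)[m] → (π₂/ϖπ₂)[m]` is injective
    (hmtors : ∀ x : π₁, (∀ a ∈ IsLocalRing.maximalIdeal A, ∃ y : π₁, a • x = ϖ • y) →
      (∃ y : π₂, f x = ϖ • y) → ∃ y : π₁, x = ϖ • y)
    -- (3a) every element of `(ker f)/ϖ(ker f)` is annihilated by some power of `m`
    (hker : ∀ x : π₁, f x = 0 →
      ∃ n : ℕ, ∀ a ∈ (IsLocalRing.maximalIdeal A) ^ n,
        ∃ z : π₁, f z = 0 ∧ a • x = ϖ • z)
    -- (3b) every element of `(coker f)[ϖ]` is annihilated by some power of `m`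
    (hcoker : ∀ y : π₂, (∃ x : π₁, f x = ϖ • y) →
      ∃ n : ℕ, ∀ a ∈ (IsLocalRing.maximalIdeal A) ^ n, ∃ x : π₁, f x = a • y) :
    Function.Bijective f :=
  statement0_general ϖ hϖ E f htf₂ hsep₁ hE hmtors hker hcoker
end

section
/- Let O be a discrete valuation ring with uniformizer ϖ, let A be a commutative local O-algebra with maximal ideal m, and let f : π₁ → π₂ be an A-linear map of A-modules. Assume that π₂ is O-torsion-free, that π₁ is ϖ-adically separated, that every element of (ker f)/ϖ(ker f) is annihilated by some power of m, and that the induced map (π₁/ϖπ₁)[m] → (π₂/ϖπ₂)[m] is injective. Then f is injective. -/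
/-! If `ϖ` is injective on `π₂`, the injectivity of `(π₁/ϖπ₁)[m] → (π₂/ϖπ₂)[m]` says that an
element of `ker f` killed by `m` modulo `ϖ · ker f` lies in `ϖ · ker f`. Descending induction on
the power of `m` killing `x ∈ ker f` modulo `ϖ · ker f` then shows `ker f = ϖ · ker f`, so
`ker f ⊆ ⋂ ϖⁿ π₁ = 0`. -/

theorem exists_pow_smul_eq_of_subset_smul_s1 {O M : Type*} [Monoid O] [MulAction O M] {S : Set M}
    {ϖ : O} (hdiv : ∀ x ∈ S, ∃ z ∈ S, x = ϖ • z) (n : ℕ) {x : M} (hx : x ∈ S) :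
    ∃ y ∈ S, x = ϖ ^ n • y := by
  induction n generalizing x with
  | zero => exact ⟨x, hx, by rw [pow_zero, one_smul]⟩
  | succ n ih =>
    obtain ⟨y, hy, rfl⟩ := hdiv x hx
    obtain ⟨z, hz, rfl⟩ := ih hy
    exact ⟨z, hz, by rw [smul_smul, pow_succ']⟩

section KernelDivisibility

variable {O A M N : Type*} [CommRing O] [CommRing A] [Algebra O A]
  [AddCommGroup M] [Module O M] [Module A M] [IsScalarTower O A M]
  [AddCommGroup N] [Module O N] [Module A N] [IsScalarTower O A N]
  (f : M →ₗ[A] N) (ϖ : O) (I : Ideal A)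

theorem exists_ker_smul_eq_of_pow_succ
    (htf : ∀ y : N, ϖ • y = 0 → y = 0)
    (htors : ∀ x : M, (∀ a ∈ I, ∃ y : M, a • x = ϖ • y) →
      (∃ y : N, f x = ϖ • y) → ∃ y : M, x = ϖ • y)
    {x : M} (hx : f x = 0) {n : ℕ}
    (hn : ∀ a ∈ I ^ (n + 1), ∃ z : M, f z = 0 ∧ a • x = ϖ • z) :
    ∀ a ∈ I ^ n, ∃ z : M, f z = 0 ∧ a • x = ϖ • z := by
  intro a ha
  have hfax : f (a • x) = 0 := by rw [map_smul, hx, smul_zero]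
  have hI : ∀ b ∈ I, ∃ y : M, b • a • x = ϖ • y := fun b hb => by
    obtain ⟨z, -, hz⟩ := hn (b * a) (by rw [pow_succ']; exact Ideal.mul_mem_mul hb ha)
    exact ⟨z, by rw [smul_smul, hz]⟩
  obtain ⟨y, hy⟩ := htors (a • x) hI ⟨0, by rw [hfax, smul_zero]⟩
  refine ⟨y, htf _ ?_, hy⟩
  rw [← f.map_smul_of_tower, ← hy, hfax]

theorem exists_ker_smul_eq_of_pow
    (htf : ∀ y : N, ϖ • y = 0 → y = 0)
    (htors : ∀ x : M, (∀ a ∈ I, ∃ y : M, a • x = ϖ • y) →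
      (∃ y : N, f x = ϖ • y) → ∃ y : M, x = ϖ • y)
    {x : M} (hx : f x = 0) {n : ℕ}
    (hn : ∀ a ∈ I ^ n, ∃ z : M, f z = 0 ∧ a • x = ϖ • z) :
    ∃ z : M, f z = 0 ∧ x = ϖ • z := by
  induction n with
  | zero => simpa using hn 1
  | succ n ih => exact ih (exists_ker_smul_eq_of_pow_succ f ϖ I htf htors hx hn)

end KernelDivisibility

theorem statement1_general {O : Type*} [CommRing O]
    (ϖ : O)
    {A : Type*} [CommRing A] [Algebra O A] [IsLocalRing A]
    {π₁ π₂ : Type*}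
    [AddCommGroup π₁] [Module O π₁] [Module A π₁] [IsScalarTower O A π₁]
    [AddCommGroup π₂] [Module O π₂] [Module A π₂] [IsScalarTower O A π₂]
    (f : π₁ →ₗ[A] π₂)
    -- `π₂` is `O`-torsion-free
    (htf₂ : ∀ y : π₂, ϖ • y = 0 → y = 0)
    -- `π₁` is `ϖ`-adically separated
    (hsep₁ : ∀ x : π₁, (∀ n : ℕ, 1 ≤ n → ∃ y : π₁, x = ϖ ^ n • y) → x = 0)
    -- every element of `(ker f)/ϖ(ker f)` is annihilated by some power of `m`
    (hker : ∀ x : π₁, f x = 0 →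
      ∃ n : ℕ, ∀ a ∈ (IsLocalRing.maximalIdeal A) ^ n,
        ∃ z : π₁, f z = 0 ∧ a • x = ϖ • z)
    -- the induced map `(π₁/ϖπ₁)[m] → (π₂/ϖπ₂)[m]` is injective
    (hmtors : ∀ x : π₁, (∀ a ∈ IsLocalRing.maximalIdeal A, ∃ y : π₁, a • x = ϖ • y) →
      (∃ y : π₂, f x = ϖ • y) → ∃ y : π₁, x = ϖ • y) :
    Function.Injective f := by
  have hdiv : ∀ x : π₁, f x = 0 → ∃ z : π₁, f z = 0 ∧ x = ϖ • z := fun x hx =>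
    have ⟨_, hn⟩ := hker x hx
    exists_ker_smul_eq_of_pow f ϖ _ htf₂ hmtors hx hn
  refine (injective_iff_map_eq_zero f).mpr fun x hx => hsep₁ x fun n _ => ?_
  obtain ⟨y, -, hy⟩ := exists_pow_smul_eq_of_subset_smul_s1 (S := {x | f x = 0}) hdiv n hx
  exact ⟨y, hy⟩

/-- Injectivity half of the key lemma: let `O` be a DVR with uniformizer `ϖ`, `A` a
commutative local `O`-algebra with maximal ideal `m`, and `f : π₁ → π₂` an `A`-linear map.
If `π₂` is `O`-torsion-free, `π₁` is `ϖ`-adically separated, every element of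
`(ker f)/ϖ(ker f)` is annihilated by a power of `m`, and the induced map
`(π₁/ϖπ₁)[m] → (π₂/ϖπ₂)[m]` is injective, then `f` is injective. -/
theorem statement1 {O : Type*} [CommRing O] [IsDomain O] [IsDiscreteValuationRing O]
    (ϖ : O) (hϖ : Irreducible ϖ)
    {A : Type*} [CommRing A] [Algebra O A] [IsLocalRing A]
    {π₁ π₂ : Type*}
    [AddCommGroup π₁] [Module O π₁] [Module A π₁] [IsScalarTower O A π₁]
    [AddCommGroup π₂] [Module O π₂] [Module A π₂] [IsScalarTower O A π₂]
    (f : π₁ →ₗ[A] π₂)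
    -- `π₂` is `O`-torsion-free
    (htf₂ : ∀ y : π₂, ϖ • y = 0 → y = 0)
    -- `π₁` is `ϖ`-adically separated
    (hsep₁ : ∀ x : π₁, (∀ n : ℕ, 1 ≤ n → ∃ y : π₁, x = ϖ ^ n • y) → x = 0)
    -- every element of `(ker f)/ϖ(ker f)` is annihilated by some power of `m`
    (hker : ∀ x : π₁, f x = 0 →
      ∃ n : ℕ, ∀ a ∈ (IsLocalRing.maximalIdeal A) ^ n,
        ∃ z : π₁, f z = 0 ∧ a • x = ϖ • z)
    -- the induced map `(π₁/ϖπ₁)[m] → (π₂/ϖπ₂)[m]` is injective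
    (hmtors : ∀ x : π₁, (∀ a ∈ IsLocalRing.maximalIdeal A, ∃ y : π₁, a • x = ϖ • y) →
      (∃ y : π₂, f x = ϖ • y) → ∃ y : π₁, x = ϖ • y) :
    Function.Injective f :=
  statement1_general ϖ f htf₂ hsep₁ hker hmtors
end

section
/- Let O be a discrete valuation ring with uniformizer ϖ and field of fractions E, let A be a commutative local O-algebra with maximal ideal m, and let f : π₁ → π₂ be an injective A-linear map of A-modules which are O-torsion-free. Assume that the induced map π₁ ⊗_O E → π₂ ⊗_O E is surjective, that every element of (coker f)[ϖ] is annihilated by some power of m, and that the induced map (π₁/ϖπ₁)[m] → (π₂/ϖπ₂)[m] is injective. Then f is surjective. -/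
/-!
Since `f` becomes surjective after inverting `ϖ`, its cokernel is `ϖ`-power torsion, so it
suffices to show that `ϖ • y ∈ range f` implies `y ∈ range f`. Such a `y` is killed in the
cokernel by some `m ^ n`, and by induction on `n` we may assume `m • y ⊆ range f`. Writing
`ϖ • y = f x`, injectivity of `f` shows that `x` mod `ϖ` lies in `(π₁/ϖπ₁)[m]` and maps to zero,
hence `x = ϖ • z`, and `ϖ`-torsion-freeness of `π₂` gives `y = f z`.
-/

open TensorProduct Function LinearMap

theorem IsDiscreteValuationRing.exists_pow_smul_mem_of_smul_mem {O M : Type*} [CommRing O]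
    [IsDomain O] [IsDiscreteValuationRing O] [AddCommMonoid M] [Module O M] {ϖ : O}
    (hϖ : Irreducible ϖ) (P : Submodule O M) {s : O} (hs : s ≠ 0) {y : M} (hy : s • y ∈ P) :
    ∃ n : ℕ, ϖ ^ n • y ∈ P := by
  obtain ⟨n, u, rfl⟩ := eq_unit_mul_pow_irreducible hs hϖ
  refine ⟨n, ?_⟩
  simpa [mul_smul] using P.smul_mem (↑u⁻¹ : O) hy

theorem mem_of_pow_smul_mem_s2 {R M : Type*} [Monoid R] [MulAction R M] {P : Set M} {r : R}
    (h : ∀ y, r • y ∈ P → y ∈ P) (n : ℕ) {y : M} (hy : r ^ n • y ∈ P) : y ∈ P := by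
  induction n generalizing y with
  | zero => simpa using hy
  | succ n ih => exact h y (ih (by rwa [← mul_smul, ← pow_succ]))

namespace LinearMap

theorem exists_smul_mem_range_of_surjective_baseChange {R M N : Type*} [CommSemiring R]
    [AddCommMonoid M] [Module R M] [AddCommMonoid N] [Module R N] (S : Submonoid R)
    (E : Type*) [CommSemiring E] [Algebra R E] [IsLocalization S E] (g : M →ₗ[R] N)
    (hg : Surjective (g.baseChange E)) (y : N) : ∃ s ∈ S, s • y ∈ range g := by
  obtain ⟨t, ht⟩ := hg (1 ⊗ₜ y)
  obtain ⟨⟨x, s⟩, hs⟩ := IsLocalizedModule.surj S (TensorProduct.mk R E M 1) t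
  have hgx : TensorProduct.mk R E N 1 (g x) = TensorProduct.mk R E N 1 (s • y) := by
    have := congrArg (g.baseChange E) hs
    simp only [map_smul_of_tower, ht] at this
    simpa [tmul_smul] using this.symm
  obtain ⟨c, hc⟩ := IsLocalizedModule.exists_of_eq (S := S) hgx
  refine ⟨c * s, S.mul_mem c.2 s.2, (c : R) • x, ?_⟩
  simpa [Submonoid.smul_def, mul_smul] using hc

variable {A M N : Type*} [CommRing A] [AddCommMonoid M] [Module A M] [AddCommGroup N] [Module A N]
  {f : M →ₗ[A] N} {p : A} {I : Ideal A}

theorem mem_range_of_smul_mem_range_of_ideal_smul_mem_range (hf : Injective f)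
    (hp : ∀ y : N, p • y = 0 → y = 0)
    (hI : ∀ x : M, (∀ a ∈ I, ∃ z, a • x = p • z) → (∃ y, f x = p • y) → ∃ z, x = p • z)
    {y : N} (hpy : p • y ∈ range f) (hIy : ∀ a ∈ I, a • y ∈ range f) : y ∈ range f := by
  obtain ⟨x, hx⟩ := hpy
  have hIx : ∀ a ∈ I, ∃ z, a • x = p • z := by
    intro a ha
    obtain ⟨z, hz⟩ := hIy a ha
    exact ⟨z, hf (by rw [map_smul, hx, map_smul, hz, smul_comm])⟩
  obtain ⟨z, rfl⟩ := hI x hIx ⟨y, hx⟩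
  refine ⟨z, sub_eq_zero.mp (hp _ ?_)⟩
  rw [smul_sub, ← map_smul, hx, sub_self]

theorem mem_range_of_smul_mem_range_of_pow_ideal_smul_mem_range (hf : Injective f)
    (hp : ∀ y : N, p • y = 0 → y = 0)
    (hI : ∀ x : M, (∀ a ∈ I, ∃ z, a • x = p • z) → (∃ y, f x = p • y) → ∃ z, x = p • z)
    (n : ℕ) {y : N} (hpy : p • y ∈ range f) (hIy : ∀ a ∈ I ^ n, a • y ∈ range f) :
    y ∈ range f := by
  induction n generalizing y with
  | zero => simpa using hIy 1 (by simp)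
  | succ n ih =>
    refine mem_range_of_smul_mem_range_of_ideal_smul_mem_range hf hp hI hpy fun a ha ↦ ?_
    refine ih (by rw [smul_comm]; exact (range f).smul_mem a hpy) fun b hb ↦ ?_
    rw [← mul_smul]
    exact hIy _ (by rw [pow_succ]; exact Ideal.mul_mem_mul hb ha)

end LinearMap

theorem statement2_general {O : Type*} [CommRing O] [IsDomain O] [IsDiscreteValuationRing O]
    (ϖ : O) (hϖ : Irreducible ϖ)
    (E : Type*) [Field E] [Algebra O E] [IsFractionRing O E]
    {A : Type*} [CommRing A] [Algebra O A] [IsLocalRing A]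
    {π₁ π₂ : Type*}
    [AddCommGroup π₁] [Module O π₁] [Module A π₁] [IsScalarTower O A π₁]
    [AddCommGroup π₂] [Module O π₂] [Module A π₂] [IsScalarTower O A π₂]
    (f : π₁ →ₗ[A] π₂) (hf : Function.Injective f)
    -- `π₁` and `π₂` are `O`-torsion-free
    (htf₂ : ∀ y : π₂, ϖ • y = 0 → y = 0)
    -- the induced map `π₁ ⊗_O E → π₂ ⊗_O E` is surjective
    (hE : Function.Surjective ((f.restrictScalars O).baseChange E))
    -- every element of `(coker f)[ϖ]` is annihilated by some power of `m`
    (hcoker : ∀ y : π₂, (∃ x : π₁, f x = ϖ • y) →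
      ∃ n : ℕ, ∀ a ∈ (IsLocalRing.maximalIdeal A) ^ n, ∃ x : π₁, f x = a • y)
    -- the induced map `(π₁/ϖπ₁)[m] → (π₂/ϖπ₂)[m]` is injective
    (hmtors : ∀ x : π₁, (∀ a ∈ IsLocalRing.maximalIdeal A, ∃ y : π₁, a • x = ϖ • y) →
      (∃ y : π₂, f x = ϖ • y) → ∃ y : π₁, x = ϖ • y) :
    Function.Surjective f := by
  simp only [← algebraMap_smul A ϖ] at htf₂ hcoker hmtors
  have hdiv : ∀ y, algebraMap O A ϖ • y ∈ range f → y ∈ range f := fun y hy ↦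
    have ⟨n, hn⟩ := hcoker y hy
    mem_range_of_smul_mem_range_of_pow_ideal_smul_mem_range hf htf₂ hmtors n hy hn
  intro y
  obtain ⟨s, hs, hsy⟩ := (f.restrictScalars O).exists_smul_mem_range_of_surjective_baseChange
    (nonZeroDivisors O) E hE y
  obtain ⟨n, hn⟩ := IsDiscreteValuationRing.exists_pow_smul_mem_of_smul_mem hϖ
    (range (f.restrictScalars O)) (nonZeroDivisors.ne_zero hs) hsy
  rw [← algebraMap_smul A, map_pow] at hn
  exact mem_of_pow_smul_mem_s2 hdiv n hn

/-- Surjectivity half of the key lemma: let `O` be a DVR with uniformizer `ϖ` and fraction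
field `E`, `A` a commutative local `O`-algebra with maximal ideal `m`, and `f : π₁ → π₂` an
injective `A`-linear map of `O`-torsion-free modules. If the induced map
`π₁ ⊗_O E → π₂ ⊗_O E` is surjective, every element of `(coker f)[ϖ]` is annihilated
by a power of `m`, and the induced map `(π₁/ϖπ₁)[m] → (π₂/ϖπ₂)[m]` is injective,
then `f` is surjective. -/
theorem statement2 {O : Type*} [CommRing O] [IsDomain O] [IsDiscreteValuationRing O]
    (ϖ : O) (hϖ : Irreducible ϖ)
    (E : Type*) [Field E] [Algebra O E] [IsFractionRing O E]
    {A : Type*} [CommRing A] [Algebra O A] [IsLocalRing A]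
    {π₁ π₂ : Type*}
    [AddCommGroup π₁] [Module O π₁] [Module A π₁] [IsScalarTower O A π₁]
    [AddCommGroup π₂] [Module O π₂] [Module A π₂] [IsScalarTower O A π₂]
    (f : π₁ →ₗ[A] π₂) (hf : Function.Injective f)
    -- `π₁` and `π₂` are `O`-torsion-free
    (htf₁ : ∀ x : π₁, ϖ • x = 0 → x = 0)
    (htf₂ : ∀ y : π₂, ϖ • y = 0 → y = 0)
    -- the induced map `π₁ ⊗_O E → π₂ ⊗_O E` is surjective
    (hE : Function.Surjective ((f.restrictScalars O).baseChange E))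
    -- every element of `(coker f)[ϖ]` is annihilated by some power of `m`
    (hcoker : ∀ y : π₂, (∃ x : π₁, f x = ϖ • y) →
      ∃ n : ℕ, ∀ a ∈ (IsLocalRing.maximalIdeal A) ^ n, ∃ x : π₁, f x = a • y)
    -- the induced map `(π₁/ϖπ₁)[m] → (π₂/ϖπ₂)[m]` is injective
    (hmtors : ∀ x : π₁, (∀ a ∈ IsLocalRing.maximalIdeal A, ∃ y : π₁, a • x = ϖ • y) →
      (∃ y : π₂, f x = ϖ • y) → ∃ y : π₁, x = ϖ • y) :
    Function.Surjective f :=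
  statement2_general ϖ hϖ E f hf htf₂ hE hcoker hmtors
end
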